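/- The packing density of the permutation 231564 is at least (2√3 − 3)² · 6!/48², i.e. p(231564) ≥ (5/16)·(2√3 − 3)². -/

import Mathlib

open Filter Real

/-- Number of occurrences of the pattern `S` in the permutation `P`:
an occurrence is a strictly increasing choice of positions whose entries
appear in the same relative order as `S`. -/
def numOcc {m n : ℕ} (S : Equiv.Perm (Fin m)) (P : Equiv.Perm (Fin n)) : ℕ :=
  (Finset.univ.filter
    (fun f : Fin m → Fin n =>
      (∀ i j : Fin m, i < j → f i < f j) ∧
      (∀ i j : Fin m, S i < S j ↔ P (f i) < P (f j)))).card

/-- The pattern density `p(S,P)`: the number of occurrences of `S` in `P`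
divided by `C(n,m)` (this is `0` when `n < m`, since then `C(n,m) = 0`
and there are no occurrences). -/
noncomputable def patternDensity {m n : ℕ} (S : Equiv.Perm (Fin m)) (P : Equiv.Perm (Fin n)) : ℝ :=
  (numOcc S P : ℝ) / (n.choose m : ℝ)

/-- `p(S,n)`: the maximum of `p(S,P)` over all permutations `P` of length `n`. -/
noncomputable def maxDensity {m : ℕ} (S : Equiv.Perm (Fin m)) (n : ℕ) : ℝ :=
  ⨆ P : Equiv.Perm (Fin n), patternDensity S P

/-- `P` avoids the pattern `T` if `P` has no occurrence of `T`. -/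
def avoids {k n : ℕ} (T : Equiv.Perm (Fin k)) (P : Equiv.Perm (Fin n)) : Prop :=
  numOcc T P = 0

/-- `p(S,n;T)`: the maximum of `p(S,P)` over all `T`-avoiding permutations `P` of length `n`. -/
noncomputable def maxDensityAvoiding {m k : ℕ} (S : Equiv.Perm (Fin m)) (T : Equiv.Perm (Fin k))
    (n : ℕ) : ℝ :=
  sSup {x : ℝ | ∃ P : Equiv.Perm (Fin n), avoids T P ∧ x = patternDensity S P}

/-- The permutation 231564 (0-indexed one-line notation). -/
def perm231564 : Equiv.Perm (Fin 6) :=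
  ⟨![1,2,0,4,5,3], ![2,0,1,5,3,4], by intro x; fin_cases x <;> rfl, by intro x; fin_cases x <;> rfl⟩

namespace PackingAux

open Finset

def occSet {m n : ℕ} (S : Equiv.Perm (Fin m)) (P : Equiv.Perm (Fin n)) : Finset (Fin m → Fin n) :=
  Finset.univ.filter
    (fun f : Fin m → Fin n =>
      (∀ i j : Fin m, i < j → f i < f j) ∧
      (∀ i j : Fin m, S i < S j ↔ P (f i) < P (f j)))

lemma numOcc_eq {m n : ℕ} (S : Equiv.Perm (Fin m)) (P : Equiv.Perm (Fin n)) :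
    numOcc S P = (occSet S P).card := rfl

lemma patternDensity_nonneg {m n : ℕ} (S : Equiv.Perm (Fin m)) (P : Equiv.Perm (Fin n)) :
    0 ≤ patternDensity S P :=
  div_nonneg (Nat.cast_nonneg _) (Nat.cast_nonneg _)

lemma le_maxDensity {m n : ℕ} (S : Equiv.Perm (Fin m)) (P : Equiv.Perm (Fin n)) :
    patternDensity S P ≤ maxDensity S n :=
  le_ciSup (Set.Finite.bddAbove (Set.finite_range _)) P

lemma maxDensity_nonneg {m : ℕ} (S : Equiv.Perm (Fin m)) (n : ℕ) :
    0 ≤ maxDensity S n :=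
  le_trans (patternDensity_nonneg S 1) (le_maxDensity S 1)

/-! ### deletion of a point -/

noncomputable def contractFin {n : ℕ} (p x : Fin (n+1)) (h : x ≠ p) : Fin n :=
  (finSuccAboveEquiv p).symm ⟨x, h⟩

lemma succAbove_contractFin {n : ℕ} (p x : Fin (n+1)) (h : x ≠ p) :
    p.succAbove (contractFin p x h) = x := by
  have h2 : finSuccAboveEquiv p (contractFin p x h) = ⟨x, h⟩ :=
    (finSuccAboveEquiv p).apply_symm_apply ⟨x, h⟩
  rw [finSuccAboveEquiv_apply] at h2
  exact congrArg Subtype.val h2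

noncomputable def delPerm {n : ℕ} (P : Equiv.Perm (Fin (n+1))) (t : Fin (n+1)) :
    Equiv.Perm (Fin n) :=
  Equiv.ofBijective
    (fun i => contractFin (P t) (P (t.succAbove i))
      (fun h => (t.succAbove_ne i) (P.injective h)))
    (Finite.injective_iff_bijective.mp (by
      intro i j hij
      have h1 := succAbove_contractFin (P t) (P (t.succAbove i))
        (fun h => (t.succAbove_ne i) (P.injective h))
      have h2 := succAbove_contractFin (P t) (P (t.succAbove j))
        (fun h => (t.succAbove_ne j) (P.injective h))
      simp only at hij
      rw [hij] at h1
      have := P.injective (h1.symm.trans h2)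
      exact (Fin.succAbove_right_injective (p := t)) this))

lemma delPerm_lt_iff {n : ℕ} (P : Equiv.Perm (Fin (n+1))) (t : Fin (n+1)) (i j : Fin n) :
    delPerm P t i < delPerm P t j ↔ P (t.succAbove i) < P (t.succAbove j) := by
  rw [← Fin.succAbove_lt_succAbove_iff (p := P t)]
  unfold delPerm
  rw [Equiv.ofBijective_apply, Equiv.ofBijective_apply,
    succAbove_contractFin, succAbove_contractFin]

section AVG

variable {m n : ℕ}

lemma card_avoid_le (S : Equiv.Perm (Fin m)) (P : Equiv.Perm (Fin (n+1))) (hn : 0 < n)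
    (t : Fin (n+1)) :
    ((occSet S P).filter (fun f => ∀ i, f i ≠ t)).card ≤ numOcc S (delPerm P t) := by
  rw [numOcc_eq]
  apply Finset.card_le_card_of_injOn
    (fun f => fun i => if h : f i ≠ t then contractFin t (f i) h else ⟨0, hn⟩)
  · intro f hf
    obtain ⟨hf1, havoid⟩ := Finset.mem_filter.mp hf
    obtain ⟨-, h1, h2⟩ := Finset.mem_filter.mp hf1
    have key : ∀ i, t.succAbove
        ((fun i => if h : f i ≠ t then contractFin t (f i) h else ⟨0, hn⟩) i) = f i := by
      intro i
      simp only [dif_pos (havoid i)]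
      exact succAbove_contractFin t (f i) (havoid i)
    refine Finset.mem_filter.mpr ⟨Finset.mem_univ _, ?_, ?_⟩
    · intro i j hij
      rw [← Fin.succAbove_lt_succAbove_iff (p := t), key i, key j]
      exact h1 i j hij
    · intro i j
      rw [delPerm_lt_iff, key i, key j]
      exact h2 i j
  · intro f hf g hg hfg
    funext i
    obtain ⟨-, havf⟩ := Finset.mem_filter.mp hf
    obtain ⟨-, havg⟩ := Finset.mem_filter.mp hg
    have e1 : t.succAbove (if h : f i ≠ t then contractFin t (f i) h else ⟨0, hn⟩) = f i := by
      simp only [dif_pos (havf i)]; exact succAbove_contractFin t (f i) (havf i)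
    have e2 : t.succAbove (if h : g i ≠ t then contractFin t (g i) h else ⟨0, hn⟩) = g i := by
      simp only [dif_pos (havg i)]; exact succAbove_contractFin t (g i) (havg i)
    rw [← e1, ← e2]
    exact congrArg t.succAbove (congrFun hfg i)

lemma sum_card_avoid (S : Equiv.Perm (Fin m)) (P : Equiv.Perm (Fin (n+1))) :
    ∑ t : Fin (n+1), ((occSet S P).filter (fun f => ∀ i, f i ≠ t)).card
      = (n + 1 - m) * numOcc S P := by
  have step1 : ∀ t : Fin (n+1), ((occSet S P).filter (fun f => ∀ i, f i ≠ t)).card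
      = ∑ f ∈ occSet S P, if (∀ i, f i ≠ t) then 1 else 0 := by
    intro t; rw [Finset.card_filter]
  simp only [step1]
  rw [Finset.sum_comm]
  have step2 : ∀ f ∈ occSet S P,
      (∑ t : Fin (n+1), if (∀ i, f i ≠ t) then 1 else 0) = n + 1 - m := by
    intro f hf
    obtain ⟨-, h1, -⟩ := Finset.mem_filter.mp hf
    have hinj : Function.Injective f := by
      have : StrictMono f := fun i j hij => h1 i j hij
      exact this.injective
    rw [← Finset.card_filter]
    have : (Finset.univ.filter (fun t => ∀ i, f i ≠ t))
        = Finset.univ \ (Finset.image f Finset.univ) := by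
      ext t
      simp only [Finset.mem_filter, Finset.mem_sdiff, Finset.mem_univ, true_and,
        Finset.mem_image, not_exists, not_and]
    rw [this, Finset.card_sdiff_of_subset (Finset.subset_univ _),
      Finset.card_image_of_injective _ hinj]
    simp [Finset.card_univ]
  rw [Finset.sum_congr rfl step2, Finset.sum_const, numOcc_eq, smul_eq_mul, mul_comm]

lemma maxDensity_succ_le (S : Equiv.Perm (Fin m)) (hm1 : 1 ≤ m) (hm : m ≤ n) :
    maxDensity S (n+1) ≤ maxDensity S n := by
  have hn : 0 < n := lt_of_lt_of_le hm1 hm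
  apply ciSup_le
  intro P
  obtain ⟨Q0, -, hQ0⟩ := Finset.exists_mem_eq_sup (Finset.univ : Finset (Equiv.Perm (Fin n)))
    ⟨1, Finset.mem_univ 1⟩ (fun Q => numOcc S Q)
  have key : (n + 1 - m) * numOcc S P ≤ (n + 1) * numOcc S Q0 := by
    calc (n + 1 - m) * numOcc S P
        = ∑ t : Fin (n+1), ((occSet S P).filter (fun f => ∀ i, f i ≠ t)).card :=
          (sum_card_avoid S P).symm
      _ ≤ ∑ t : Fin (n+1), numOcc S (delPerm P t) :=
          Finset.sum_le_sum (fun t _ => card_avoid_le S P hn t)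
      _ ≤ ∑ _t : Fin (n+1), numOcc S Q0 := by
          refine Finset.sum_le_sum (fun t _ => ?_)
          rw [← hQ0]
          exact Finset.le_sup (Finset.mem_univ _)
      _ = (n + 1) * numOcc S Q0 := by simp [Finset.sum_const, mul_comm]
  have hid : (n + 1 - m) * ((n+1).choose m) = (n + 1) * (n.choose m) := by
    have h1 := Nat.add_one_mul_choose_eq n (n - m)
    rw [Nat.choose_symm hm] at h1
    have h2 : n - m + 1 = n + 1 - m := by omega
    rw [h2] at h1
    rw [Nat.choose_symm (le_trans hm (Nat.le_succ n))] at h1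
    rw [h1]; ring
  have keyn : numOcc S P * n.choose m * (n+1) ≤ numOcc S Q0 * ((n+1).choose m) * (n+1) := by
    calc numOcc S P * n.choose m * (n+1) = numOcc S P * ((n+1) * n.choose m) := by ring
      _ = numOcc S P * ((n + 1 - m) * ((n+1).choose m)) := by rw [hid]
      _ = ((n + 1 - m) * numOcc S P) * ((n+1).choose m) := by ring
      _ ≤ ((n + 1) * numOcc S Q0) * ((n+1).choose m) := Nat.mul_le_mul_right _ key
      _ = numOcc S Q0 * (n+1).choose m * (n+1) := by ring
  have keyn2 : numOcc S P * n.choose m ≤ numOcc S Q0 * (n+1).choose m :=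
    Nat.le_of_mul_le_mul_right keyn (Nat.succ_pos n)
  have hc1 : (0:ℝ) < ((n+1).choose m : ℝ) := by
    exact_mod_cast Nat.choose_pos (le_trans hm (Nat.le_succ n))
  have hc0 : (0:ℝ) < (n.choose m : ℝ) := by exact_mod_cast Nat.choose_pos hm
  have : patternDensity S P ≤ patternDensity S Q0 := by
    unfold patternDensity
    rw [div_le_div_iff₀ hc1 hc0]
    exact_mod_cast keyn2
  exact le_trans this (le_maxDensity S Q0)

end AVG

/-! ### Layered permutations and the doubled permutation -/

section Layered

variable (K : ℕ) (l : ℕ → ℕ)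

def cum (u : ℕ) : ℕ := ∑ i ∈ Finset.range u, l i

variable {K l}

lemma cum_mono : Monotone (cum l) := fun u v h =>
  Finset.sum_le_sum_of_subset (Finset.range_subset_range.2 h)

lemma cum_succ (u : ℕ) : cum l (u+1) = cum l u + l u := Finset.sum_range_succ l u

variable (K l)

def layer (x : ℕ) : ℕ := Nat.findGreatest (fun u => cum l u ≤ x) K

variable {K l}

lemma layer_spec (x : ℕ) : cum l (layer K l x) ≤ x :=
  Nat.findGreatest_spec (P := fun u => cum l u ≤ x) (Nat.zero_le K) (by simp [cum])

lemma layer_le (x : ℕ) : layer K l x ≤ K := Nat.findGreatest_le K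

lemma layer_lt {x : ℕ} (hx : x < cum l K) : layer K l x < K := by
  rcases Nat.lt_or_ge (layer K l x) K with h | h
  · exact h
  · exfalso
    have h2 := layer_spec (K := K) (l := l) x
    have h3 := cum_mono (l := l) h
    omega

lemma lt_cum_layer {x : ℕ} (hx : x < cum l K) : x < cum l (layer K l x + 1) := by
  by_contra h
  have h2 : cum l (layer K l x + 1) ≤ x := by omega
  exact Nat.findGreatest_is_greatest (P := fun u => cum l u ≤ x)
    (Nat.lt_succ_self (layer K l x)) (layer_lt hx) h2

lemma layer_eq {u x : ℕ} (hu : u < K) (h1 : cum l u ≤ x) (h2 : x < cum l (u+1)) :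
    layer K l x = u := by
  refine le_antisymm ?_ (Nat.le_findGreatest hu.le h1)
  by_contra h
  have h3 : u + 1 ≤ layer K l x := by omega
  have h4 := cum_mono (l := l) h3
  have h5 := layer_spec (K := K) (l := l) x
  omega

lemma layer_ge {u x : ℕ} (hu : u ≤ K) (h1 : cum l u ≤ x) : u ≤ layer K l x :=
  Nat.le_findGreatest hu h1

variable (K l)

def bN (x : ℕ) : ℕ := cum l (layer K l x) + (cum l (layer K l x + 1) - 1 - x)

variable {K l}

lemma bN_lt {x : ℕ} (hx : x < cum l K) : bN K l x < cum l K := by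
  have h1 := layer_spec (K := K) (l := l) x
  have h2 := lt_cum_layer (K := K) hx
  have h3 : layer K l x + 1 ≤ K := layer_lt hx
  have h4 : cum l (layer K l x + 1) ≤ cum l K := cum_mono (l := l) h3
  have h5 : bN K l x = cum l (layer K l x) + (cum l (layer K l x + 1) - 1 - x) := rfl
  omega

lemma layer_bN {x : ℕ} (hx : x < cum l K) : layer K l (bN K l x) = layer K l x := by
  have h1 := layer_spec (K := K) (l := l) x
  have h2 := lt_cum_layer (K := K) hx
  have h5 : bN K l x = cum l (layer K l x) + (cum l (layer K l x + 1) - 1 - x) := rfl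
  refine layer_eq (layer_lt hx) (by omega) (by omega)

lemma bN_bN {x : ℕ} (hx : x < cum l K) : bN K l (bN K l x) = x := by
  have h1 := layer_spec (K := K) (l := l) x
  have h2 := lt_cum_layer (K := K) hx
  have h3 := layer_bN (K := K) hx
  have h4 : bN K l x = cum l (layer K l x) + (cum l (layer K l x + 1) - 1 - x) := rfl
  calc bN K l (bN K l x)
      = cum l (layer K l (bN K l x)) + (cum l (layer K l (bN K l x) + 1) - 1 - bN K l x) := rfl
    _ = cum l (layer K l x) + (cum l (layer K l x + 1) - 1 - bN K l x) := by rw [h3]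
    _ = x := by omega

variable (K l)

def Vperm : Equiv.Perm (Fin (cum l K)) :=
  (Function.Involutive.toPerm
      (fun x => ⟨bN K l x.val, bN_lt x.isLt⟩)
      (fun x => Fin.ext (bN_bN x.isLt))).trans Fin.revPerm

variable {K l}

lemma Vperm_val (x : Fin (cum l K)) :
    (Vperm K l x : ℕ) = cum l K - 1 - bN K l x.val := by
  simp [Vperm, Function.Involutive.toPerm, Fin.val_rev]
  omega

lemma Vperm_lt_same {x y : Fin (cum l K)} (h : layer K l x.val = layer K l y.val)
    (hxy : x.val < y.val) : Vperm K l x < Vperm K l y := by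
  rw [Fin.lt_def, Vperm_val, Vperm_val]
  have hbx : bN K l x.val = cum l (layer K l x.val) + (cum l (layer K l x.val + 1) - 1 - x.val) := rfl
  have hby : bN K l y.val = cum l (layer K l y.val) + (cum l (layer K l y.val + 1) - 1 - y.val) := rfl
  have h1 := layer_spec (K := K) (l := l) x.val
  have h2 := lt_cum_layer (K := K) x.isLt
  have h3 := layer_spec (K := K) (l := l) y.val
  have h4 := lt_cum_layer (K := K) y.isLt
  have h5 := bN_lt (K := K) x.isLt
  have h6 := bN_lt (K := K) y.isLt
  rw [h] at hbx h1 h2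
  omega

lemma Vperm_lt_cross {x y : Fin (cum l K)} (h : layer K l x.val < layer K l y.val) :
    Vperm K l y < Vperm K l x := by
  rw [Fin.lt_def, Vperm_val, Vperm_val]
  have hbx : bN K l x.val = cum l (layer K l x.val) + (cum l (layer K l x.val + 1) - 1 - x.val) := rfl
  have hby : bN K l y.val = cum l (layer K l y.val) + (cum l (layer K l y.val + 1) - 1 - y.val) := rfl
  have h1 := layer_spec (K := K) (l := l) x.val
  have h2 := lt_cum_layer (K := K) x.isLt
  have h3 := layer_spec (K := K) (l := l) y.val
  have h5 := bN_lt (K := K) x.isLt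
  have h6 := bN_lt (K := K) y.isLt
  have h7 : layer K l x.val + 1 ≤ layer K l y.val := h
  have h8 : cum l (layer K l x.val + 1) ≤ cum l (layer K l y.val) := cum_mono (l := l) h7
  omega

variable (K l)

def Dperm : Equiv.Perm (Fin (cum l K + cum l K)) :=
  finSumFinEquiv.symm.trans ((Equiv.sumCongr (Vperm K l) (Vperm K l)).trans finSumFinEquiv)

variable {K l}

lemma Dperm_castAdd (a : Fin (cum l K)) :
    Dperm K l (Fin.castAdd (cum l K) a) = Fin.castAdd (cum l K) (Vperm K l a) := by
  simp only [Dperm, Equiv.trans_apply, finSumFinEquiv_symm_apply_castAdd,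
    Equiv.sumCongr_apply, Sum.map_inl, finSumFinEquiv_apply_left]

lemma Dperm_natAdd (a : Fin (cum l K)) :
    Dperm K l (Fin.natAdd (cum l K) a) = Fin.natAdd (cum l K) (Vperm K l a) := by
  simp only [Dperm, Equiv.trans_apply, finSumFinEquiv_symm_apply_natAdd,
    Equiv.sumCongr_apply, Sum.map_inr, finSumFinEquiv_apply_right]

end Layered

/-! ### Counting occurrences in the doubled layered permutation -/

abbrev Dat : Type := Σ _ : ℕ, (Σ _ : ℕ, ℕ) × ℕ

section Count

variable (K : ℕ) (l : ℕ → ℕ)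

def Gset : Finset Dat :=
  (Finset.range K).sigma (fun u =>
    ((Finset.range (l u)).sigma (fun j => Finset.range j)) ×ˢ
      (Finset.range (cum l K - cum l (u+1))))

lemma card_Gset : (Gset K l).card
    = ∑ u ∈ Finset.range K, (∑ j ∈ Finset.range (l u), j) * (cum l K - cum l (u+1)) := by
  rw [Gset, Finset.card_sigma]
  refine Finset.sum_congr rfl fun u _ => ?_
  rw [Finset.card_product, Finset.card_sigma]
  simp

def px (d : Dat) : ℕ := cum l d.1 + d.2.1.2
def py (d : Dat) : ℕ := cum l d.1 + d.2.1.1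
def pz (d : Dat) : ℕ := cum l (d.1+1) + d.2.2

variable {K l}

lemma mem_Gset_iff {d : Dat} : d ∈ Gset K l ↔
    d.1 < K ∧ d.2.1.1 < l d.1 ∧ d.2.1.2 < d.2.1.1 ∧ d.2.2 < cum l K - cum l (d.1+1) := by
  obtain ⟨u, ⟨⟨j, i⟩, z⟩⟩ := d
  simp [Gset, Finset.mem_sigma, Finset.mem_product, and_assoc]

lemma Gset_facts {d : Dat} (hd : d ∈ Gset K l) :
    cum l d.1 ≤ px l d ∧ px l d < py l d ∧ py l d < cum l (d.1+1) ∧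
    cum l (d.1+1) ≤ pz l d ∧ pz l d < cum l K ∧
    layer K l (px l d) = d.1 ∧ layer K l (py l d) = d.1 ∧ d.1 + 1 ≤ layer K l (pz l d) := by
  obtain ⟨hu, hj, hi, hz⟩ := mem_Gset_iff.mp hd
  have hc : cum l (d.1+1) = cum l d.1 + l d.1 := cum_succ _
  have hK : cum l (d.1+1) ≤ cum l K := cum_mono (show d.1+1 ≤ K from hu)
  have h1 : cum l d.1 ≤ px l d := Nat.le_add_right _ _
  have h2 : px l d < py l d := by unfold px py; omega
  have h3 : py l d < cum l (d.1+1) := by unfold py; omega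
  have h4 : cum l (d.1+1) ≤ pz l d := Nat.le_add_right _ _
  have h5 : pz l d < cum l K := by unfold pz; omega
  refine ⟨h1, h2, h3, h4, h5, ?_, ?_, ?_⟩
  · exact layer_eq hu h1 (by omega)
  · exact layer_eq hu (by unfold px py at *; omega) h3
  · exact layer_ge (show d.1+1 ≤ K from hu) h4

def fmk {n : ℕ} (hn : 0 < n) (a : ℕ) : Fin n := ⟨a % n, Nat.mod_lt a hn⟩

lemma fmk_val {n : ℕ} (hn : 0 < n) {a : ℕ} (h : a < n) : (fmk hn a : ℕ) = a :=
  Nat.mod_eq_of_lt h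

variable (K l)

def Phi (hN : 0 < cum l K) : Dat × Dat → (Fin 6 → Fin (cum l K + cum l K)) :=
  fun dd => fun i =>
    if i.val = 0 then Fin.castAdd _ (fmk hN (px l dd.1))
    else if i.val = 1 then Fin.castAdd _ (fmk hN (py l dd.1))
    else if i.val = 2 then Fin.castAdd _ (fmk hN (pz l dd.1))
    else if i.val = 3 then Fin.natAdd _ (fmk hN (px l dd.2))
    else if i.val = 4 then Fin.natAdd _ (fmk hN (py l dd.2))
    else Fin.natAdd _ (fmk hN (pz l dd.2))

variable {K l}

lemma chain6_mono {α : Type*} [Preorder α] (f : Fin 6 → α)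
    (h01 : f 0 < f 1) (h12 : f 1 < f 2) (h23 : f 2 < f 3) (h34 : f 3 < f 4)
    (h45 : f 4 < f 5) : ∀ a b : Fin 6, a < b → f a < f b := by
  have h02 := h01.trans h12
  have h03 := h02.trans h23
  have h04 := h03.trans h34
  have h05 := h04.trans h45
  have h13 := h12.trans h23
  have h14 := h13.trans h34
  have h15 := h14.trans h45
  have h24 := h23.trans h34
  have h25 := h24.trans h45
  have h35 := h34.trans h45
  intro a b hab
  fin_cases a <;> fin_cases b <;>
    first
      | exact absurd hab (by decide)
      | assumption

lemma chain6_pattern {n : ℕ} (P : Equiv.Perm (Fin n)) (f : Fin 6 → Fin n)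
    (h1 : P (f 2) < P (f 0)) (h2 : P (f 0) < P (f 1)) (h3 : P (f 1) < P (f 5))
    (h4 : P (f 5) < P (f 3)) (h5 : P (f 3) < P (f 4)) :
    ∀ a b : Fin 6, perm231564 a < perm231564 b ↔ P (f a) < P (f b) := by
  simp only [Fin.lt_def] at h1 h2 h3 h4 h5 ⊢
  intro a b
  fin_cases a <;> fin_cases b <;>
    simp only [show ∀ h, perm231564 ⟨0,h⟩ = ⟨1, by omega⟩ from fun _ => rfl,
      show ∀ h, perm231564 ⟨1,h⟩ = ⟨2, by omega⟩ from fun _ => rfl,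
      show ∀ h, perm231564 ⟨2,h⟩ = ⟨0, by omega⟩ from fun _ => rfl,
      show ∀ h, perm231564 ⟨3,h⟩ = ⟨4, by omega⟩ from fun _ => rfl,
      show ∀ h, perm231564 ⟨4,h⟩ = ⟨5, by omega⟩ from fun _ => rfl,
      show ∀ h, perm231564 ⟨5,h⟩ = ⟨3, by omega⟩ from fun _ => rfl] <;>
    simp <;> omega

lemma card_sq_le_numOcc (hN : 0 < cum l K) :
    (Gset K l).card ^ 2 ≤ numOcc perm231564 (Dperm K l) := by
  rw [numOcc_eq, sq, ← Finset.card_product]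
  refine Finset.card_le_card_of_injOn (Phi K l hN) ?_ ?_
  · -- maps to occurrences
    intro dd hdd
    obtain ⟨hd1, hd2⟩ := Finset.mem_product.mp hdd
    obtain ⟨a1, b1, c1, d1, e1, f1, g1, i1⟩ := Gset_facts hd1
    obtain ⟨a2, b2, c2, d2, e2, f2, g2, i2⟩ := Gset_facts hd2
    have hpx1 : px l dd.1 < cum l K := by
      have := cum_mono (l := l) (show dd.1.1 + 1 ≤ K from mem_Gset_iff.mp hd1 |>.1)
      omega
    have hpy1 : py l dd.1 < cum l K := by
      have := cum_mono (l := l) (show dd.1.1 + 1 ≤ K from mem_Gset_iff.mp hd1 |>.1)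
      omega
    have hpx2 : px l dd.2 < cum l K := by
      have := cum_mono (l := l) (show dd.2.1 + 1 ≤ K from mem_Gset_iff.mp hd2 |>.1)
      omega
    have hpy2 : py l dd.2 < cum l K := by
      have := cum_mono (l := l) (show dd.2.1 + 1 ≤ K from mem_Gset_iff.mp hd2 |>.1)
      omega
    have vx1 : (fmk hN (px l dd.1) : ℕ) = px l dd.1 := fmk_val hN hpx1
    have vy1 : (fmk hN (py l dd.1) : ℕ) = py l dd.1 := fmk_val hN hpy1
    have vz1 : (fmk hN (pz l dd.1) : ℕ) = pz l dd.1 := fmk_val hN e1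
    have vx2 : (fmk hN (px l dd.2) : ℕ) = px l dd.2 := fmk_val hN hpx2
    have vy2 : (fmk hN (py l dd.2) : ℕ) = py l dd.2 := fmk_val hN hpy2
    have vz2 : (fmk hN (pz l dd.2) : ℕ) = pz l dd.2 := fmk_val hN e2
    set f := Phi K l hN dd with hf
    have e0 : f 0 = Fin.castAdd _ (fmk hN (px l dd.1)) := rfl
    have e1' : f 1 = Fin.castAdd _ (fmk hN (py l dd.1)) := rfl
    have e2' : f 2 = Fin.castAdd _ (fmk hN (pz l dd.1)) := rfl
    have e3' : f 3 = Fin.natAdd _ (fmk hN (px l dd.2)) := rfl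
    have e4' : f 4 = Fin.natAdd _ (fmk hN (py l dd.2)) := rfl
    have e5' : f 5 = Fin.natAdd _ (fmk hN (pz l dd.2)) := rfl
    -- V-order facts
    have hVxy1 : Vperm K l (fmk hN (px l dd.1)) < Vperm K l (fmk hN (py l dd.1)) := by
      apply Vperm_lt_same
      · rw [vx1, vy1, f1, g1]
      · omega
    have hVzx1 : Vperm K l (fmk hN (pz l dd.1)) < Vperm K l (fmk hN (px l dd.1)) := by
      apply Vperm_lt_cross
      rw [vx1, vz1, f1]
      omega
    have hVxy2 : Vperm K l (fmk hN (px l dd.2)) < Vperm K l (fmk hN (py l dd.2)) := by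
      apply Vperm_lt_same
      · rw [vx2, vy2, f2, g2]
      · omega
    have hVzx2 : Vperm K l (fmk hN (pz l dd.2)) < Vperm K l (fmk hN (px l dd.2)) := by
      apply Vperm_lt_cross
      rw [vx2, vz2, f2]
      omega
    refine Finset.mem_filter.mpr ⟨Finset.mem_univ _, ?_, ?_⟩
    · apply chain6_mono <;>
        rw [Fin.lt_def] <;>
        simp only [e0, e1', e2', e3', e4', e5', Fin.coe_castAdd, Fin.coe_natAdd,
          vx1, vy1, vz1, vx2, vy2, vz2] <;>
        omega
    · apply chain6_pattern
      · rw [e2', e0, Dperm_castAdd, Dperm_castAdd]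
        simp only [Fin.lt_def, Fin.coe_castAdd]
        exact Fin.lt_def.mp hVzx1
      · rw [e0, e1', Dperm_castAdd, Dperm_castAdd]
        simp only [Fin.lt_def, Fin.coe_castAdd]
        exact Fin.lt_def.mp hVxy1
      · rw [e1', e5', Dperm_castAdd, Dperm_natAdd]
        simp only [Fin.lt_def, Fin.coe_castAdd, Fin.coe_natAdd]
        exact (Fin.is_lt _).trans_le (Nat.le_add_right _ _)
      · rw [e5', e3', Dperm_natAdd, Dperm_natAdd]
        simp only [Fin.lt_def, Fin.coe_natAdd]
        exact Nat.add_lt_add_left (Fin.lt_def.mp hVzx2) _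
      · rw [e3', e4', Dperm_natAdd, Dperm_natAdd]
        simp only [Fin.lt_def, Fin.coe_natAdd]
        exact Nat.add_lt_add_left (Fin.lt_def.mp hVxy2) _
  · -- injectivity
    rintro ⟨d1, d2⟩ hdd ⟨e1, e2⟩ hee heq
    rw [Finset.mem_coe] at hdd hee
    obtain ⟨hd1, hd2⟩ := Finset.mem_product.mp hdd
    obtain ⟨he1, he2⟩ := Finset.mem_product.mp hee
    have bnd : ∀ d ∈ Gset K l, px l d < cum l K ∧ py l d < cum l K ∧ pz l d < cum l K := by
      intro d hd
      obtain ⟨a, b, c, dd, e, -, -, -⟩ := Gset_facts hd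
      have := cum_mono (l := l) (show d.1+1 ≤ K from mem_Gset_iff.mp hd |>.1)
      omega
    have key : ∀ (d e : Dat), d ∈ Gset K l → e ∈ Gset K l →
        px l d = px l e → py l d = py l e → pz l d = pz l e → d = e := by
      rintro ⟨u, ⟨⟨j, i⟩, z⟩⟩ ⟨u', ⟨⟨j', i'⟩, z'⟩⟩ hd he hx hy hz
      obtain ⟨-, -, -, -, -, fx, -, -⟩ := Gset_facts hd
      obtain ⟨-, -, -, -, -, fx', -, -⟩ := Gset_facts he
      have fxu : layer K l (px l ⟨u, (⟨j, i⟩, z)⟩) = u := fx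
      have fxu' : layer K l (px l ⟨u', (⟨j', i'⟩, z')⟩) = u' := fx'
      have hu : u = u' := by rw [← fxu, ← fxu']; exact congrArg _ hx
      subst hu
      have hx2 : cum l u + i = cum l u + i' := hx
      have hy2 : cum l u + j = cum l u + j' := hy
      have hz2 : cum l (u+1) + z = cum l (u+1) + z' := hz
      have hi : i = i' := by omega
      have hj : j = j' := by omega
      have hz3 : z = z' := by omega
      subst hi; subst hj; subst hz3; rfl
    have q0 : Fin.castAdd (cum l K) (fmk hN (px l d1)) = Fin.castAdd (cum l K) (fmk hN (px l e1)) :=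
      congrFun heq 0
    have q1 : Fin.castAdd (cum l K) (fmk hN (py l d1)) = Fin.castAdd (cum l K) (fmk hN (py l e1)) :=
      congrFun heq 1
    have q2 : Fin.castAdd (cum l K) (fmk hN (pz l d1)) = Fin.castAdd (cum l K) (fmk hN (pz l e1)) :=
      congrFun heq 2
    have q3 : Fin.natAdd (cum l K) (fmk hN (px l d2)) = Fin.natAdd (cum l K) (fmk hN (px l e2)) :=
      congrFun heq 3
    have q4 : Fin.natAdd (cum l K) (fmk hN (py l d2)) = Fin.natAdd (cum l K) (fmk hN (py l e2)) :=
      congrFun heq 4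
    have q5 : Fin.natAdd (cum l K) (fmk hN (pz l d2)) = Fin.natAdd (cum l K) (fmk hN (pz l e2)) :=
      congrFun heq 5
    have r0 : px l d1 = px l e1 := by
      have h := congrArg Fin.val q0
      simpa [Fin.coe_castAdd, fmk_val hN (bnd d1 hd1).1, fmk_val hN (bnd e1 he1).1] using h
    have r1 : py l d1 = py l e1 := by
      have h := congrArg Fin.val q1
      simpa [Fin.coe_castAdd, fmk_val hN (bnd d1 hd1).2.1, fmk_val hN (bnd e1 he1).2.1] using h
    have r2 : pz l d1 = pz l e1 := by
      have h := congrArg Fin.val q2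
      simpa [Fin.coe_castAdd, fmk_val hN (bnd d1 hd1).2.2, fmk_val hN (bnd e1 he1).2.2] using h
    have r3 : px l d2 = px l e2 := by
      have h := congrArg Fin.val q3
      simpa [Fin.coe_natAdd, fmk_val hN (bnd d2 hd2).1, fmk_val hN (bnd e2 he2).1] using h
    have r4 : py l d2 = py l e2 := by
      have h := congrArg Fin.val q4
      simpa [Fin.coe_natAdd, fmk_val hN (bnd d2 hd2).2.1, fmk_val hN (bnd e2 he2).2.1] using h
    have r5 : pz l d2 = pz l e2 := by
      have h := congrArg Fin.val q5
      simpa [Fin.coe_natAdd, fmk_val hN (bnd d2 hd2).2.2, fmk_val hN (bnd e2 he2).2.2] using h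
    have k1 := key d1 e1 hd1 he1 r0 r1 r2
    have k2 := key d2 e2 hd2 he2 r3 r4 r5
    simp [Prod.ext_iff]
    exact ⟨k1, k2⟩
  
end Count

/-! ### From the count to a lower bound on `maxDensity` -/

lemma maxDensity_ge_bound {K : ℕ} {l : ℕ → ℕ} (hN : 0 < cum l K)
    (hch : 6 ≤ cum l K + cum l K) :
    ((Gset K l).card ^ 2 : ℝ) / (((cum l K + cum l K).choose 6 : ℕ) : ℝ)
      ≤ maxDensity perm231564 (cum l K + cum l K) := by
  refine le_trans ?_ (le_maxDensity perm231564 (Dperm K l))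
  unfold patternDensity
  have hpos : (0:ℝ) < (((cum l K + cum l K).choose 6 : ℕ) : ℝ) := by
    exact_mod_cast Nat.choose_pos hch
  rw [div_le_div_iff_of_pos_right hpos]
  exact_mod_cast card_sq_le_numOcc hN

/-! ### Specialization to scaled layer sizes -/

section Scaled

variable (K : ℕ) (c : ℕ → ℕ)

def suffK (u : ℕ) : ℕ := ∑ v ∈ Finset.Ico (u+1) K, c v
def Cnat : ℕ := ∑ u ∈ Finset.range K, c u
def Anat : ℕ := ∑ u ∈ Finset.range K, (c u)^2 * suffK K c u
def Bnat : ℕ := ∑ u ∈ Finset.range K, c u * suffK K c u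

variable {K c}

lemma cum_smul (M v : ℕ) : cum (fun u => c u * M) v = cum c v * M := by
  simp [cum, Finset.sum_mul]

lemma cum_split {u : ℕ} (hu : u < K) : cum c K = cum c (u+1) + suffK K c u := by
  unfold cum suffK
  rw [Finset.range_eq_Ico, Finset.range_eq_Ico]
  exact (Finset.sum_Ico_consecutive c (m := 0) (n := u+1) (k := K) (by omega) (by omega)).symm

lemma two_mul_cardG {M : ℕ} (hc : ∀ u, u < K → 1 ≤ c u) (hM : 1 ≤ M) :
    2 * (Gset K (fun u => c u * M)).card + Bnat K c * M^2 = Anat K c * M^3 := by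
  rw [card_Gset]
  rw [Finset.mul_sum]
  rw [Bnat, Finset.sum_mul, ← Finset.sum_add_distrib, Anat, Finset.sum_mul]
  refine Finset.sum_congr rfl fun u hu => ?_
  have hu' : u < K := Finset.mem_range.mp hu
  have hsub : cum (fun v => c v * M) K - cum (fun v => c v * M) (u+1) = suffK K c u * M := by
    rw [cum_smul, cum_smul, cum_split hu']
    ring_nf
    omega
  rw [hsub]
  set S := suffK K c u
  have hn : 1 ≤ c u * M := Nat.mul_pos (hc u hu') hM
  obtain ⟨k, hk⟩ : ∃ k, c u * M = k + 1 := ⟨c u * M - 1, by omega⟩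
  calc 2 * ((∑ j ∈ Finset.range (c u * M), j) * (S * M)) + c u * S * M ^ 2
      = ((∑ j ∈ Finset.range (c u * M), j) * 2) * (S * M) + (c u * M) * (S * M) := by ring
    _ = ((c u * M) * ((c u * M) - 1)) * (S * M) + (c u * M) * (S * M) := by
        rw [Finset.sum_range_id_mul_two]
    _ = ((k+1) * k) * (S * M) + (k+1) * (S * M) := by rw [hk]; simp
    _ = ((k+1) * (k+1)) * (S * M) := by ring
    _ = ((c u * M) * (c u * M)) * (S * M) := by rw [hk]
    _ = (c u)^2 * S * M ^ 3 := by ring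

lemma cardG_real {M : ℕ} (hc : ∀ u, u < K → 1 ≤ c u) (hM : 1 ≤ M) :
    ((Gset K (fun u => c u * M)).card : ℝ)
      = ((Anat K c : ℝ) * M^3 - (Bnat K c : ℝ) * M^2) / 2 := by
  have h := two_mul_cardG (M := M) hc hM
  have h2 : (2:ℝ) * ((Gset K (fun u => c u * M)).card : ℝ) + (Bnat K c : ℝ) * M^2
      = (Anat K c : ℝ) * M^3 := by exact_mod_cast h
  linarith

end Scaled

/-! ### The limit bound for a fixed integer layer vector -/

lemma Cnat_pos {K : ℕ} {c : ℕ → ℕ} (hK : 1 ≤ K) (hc : ∀ u, u < K → 1 ≤ c u) :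
    1 ≤ Cnat K c := by
  calc 1 ≤ c 0 := hc 0 hK
    _ ≤ ∑ u ∈ Finset.range K, c u :=
        Finset.single_le_sum (fun u _ => Nat.zero_le _) (Finset.mem_range.mpr hK)

lemma step1 {L : ℝ} (hL : Filter.Tendsto (fun n => maxDensity perm231564 n)
      Filter.atTop (nhds L))
    (K : ℕ) (c : ℕ → ℕ) (hK : 1 ≤ K) (hc : ∀ u, u < K → 1 ≤ c u) :
    (45/16 : ℝ) * ((Anat K c : ℝ) / ((Cnat K c : ℝ))^3)^2 ≤ L := by
  set A : ℝ := (Anat K c : ℝ) with hA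
  set B : ℝ := (Bnat K c : ℝ) with hB
  have hC : 1 ≤ Cnat K c := Cnat_pos hK hc
  have hCR : (1:ℝ) ≤ (Cnat K c : ℝ) := by exact_mod_cast hC
  have hC0 : (0:ℝ) < (Cnat K c : ℝ) := by linarith
  have hcum : ∀ M : ℕ, cum (fun u => c u * M) K = Cnat K c * M := by
    intro M
    rw [cum_smul]
    rfl
  -- the subsequence of maxDensity values
  have hsub : Filter.Tendsto (fun M : ℕ => Cnat K c * M + Cnat K c * M)
      Filter.atTop Filter.atTop := by
    apply Filter.tendsto_atTop_mono (f := fun M : ℕ => M) _ Filter.tendsto_id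
    intro M
    calc M = 1 * M := (one_mul M).symm
      _ ≤ Cnat K c * M := Nat.mul_le_mul_right M hC
      _ ≤ Cnat K c * M + Cnat K c * M := Nat.le_add_right _ _
  have hseq : Filter.Tendsto
      (fun M : ℕ => maxDensity perm231564 (Cnat K c * M + Cnat K c * M))
      Filter.atTop (nhds L) := hL.comp hsub
  -- the explicit lower bound sequence
  set g : ℕ → ℝ := fun M => (45/16 : ℝ) * ((A - B * (1/(M:ℝ)))^2 / ((Cnat K c : ℝ))^6)
    with hgdef
  have t1 : Filter.Tendsto (fun M : ℕ => 1/(M:ℝ)) Filter.atTop (nhds 0) :=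
    tendsto_one_div_atTop_nhds_zero_nat
  have t2 : Filter.Tendsto (fun M : ℕ => A - B * (1/(M:ℝ))) Filter.atTop
      (nhds (A - B * 0)) := tendsto_const_nhds.sub (t1.const_mul B)
  have hg : Filter.Tendsto g Filter.atTop
      (nhds ((45/16 : ℝ) * ((A - B * 0)^2 / ((Cnat K c : ℝ))^6))) :=
    ((t2.pow 2).div_const _).const_mul _
  have heq : (45/16 : ℝ) * ((A - B * 0)^2 / ((Cnat K c : ℝ))^6)
      = (45/16 : ℝ) * (A / ((Cnat K c : ℝ))^3)^2 := by
    rw [mul_zero, sub_zero, div_pow]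
    ring_nf
  rw [heq] at hg
  -- the eventual inequality
  have hev : ∀ᶠ M in Filter.atTop, g M ≤
      maxDensity perm231564 (Cnat K c * M + Cnat K c * M) := by
    filter_upwards [Filter.eventually_ge_atTop 6] with M hM6
    have hM1 : 1 ≤ M := by omega
    have hMR : (1:ℝ) ≤ (M:ℝ) := by exact_mod_cast hM1
    have hM0 : (0:ℝ) < (M:ℝ) := by linarith
    have hN : 0 < cum (fun u => c u * M) K := by
      rw [hcum]
      exact Nat.mul_pos hC hM1
    have hch : 6 ≤ cum (fun u => c u * M) K + cum (fun u => c u * M) K := by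
      rw [hcum]
      have h1 : M ≤ Cnat K c * M := by
        calc M = 1 * M := (one_mul M).symm
          _ ≤ Cnat K c * M := Nat.mul_le_mul_right M hC
      exact le_trans (le_trans hM6 h1) (Nat.le_add_right _ _)
    have hbd := maxDensity_ge_bound hN hch
    rw [hcum] at hbd
    refine le_trans ?_ hbd
    -- compare with the explicit form
    have hcard : ((Gset K (fun u => c u * M)).card : ℝ) = (A * M^3 - B * M^2) / 2 :=
      cardG_real hc hM1
    set n2 : ℕ := Cnat K c * M + Cnat K c * M with hn2
    have h6 : 6 ≤ n2 := by
      have h := hch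
      rw [hcum] at h
      exact h
    have hchoosepos : (0:ℝ) < ((n2.choose 6 : ℕ) : ℝ) := by
      exact_mod_cast Nat.choose_pos h6
    have hchooseub : ((n2.choose 6 : ℕ) : ℝ) ≤ ((n2:ℝ))^6 / 720 := by
      have h := Nat.choose_le_pow_div (α := ℝ) 6 n2
      norm_num [Nat.factorial] at h
      exact_mod_cast h
    have hcard0 : (0:ℝ) ≤ ((Gset K (fun u => c u * M)).card : ℝ)^2 := sq_nonneg _
    have hstep : ((Gset K (fun u => c u * M)).card : ℝ)^2 / (((n2:ℝ))^6 / 720)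
        ≤ ((Gset K (fun u => c u * M)).card : ℝ)^2 / ((n2.choose 6 : ℕ) : ℝ) :=
      div_le_div_of_nonneg_left hcard0 hchoosepos hchooseub
    refine le_trans ?_ (le_trans hstep (le_of_eq ?_))
    · -- g M ≤ cardG^2 / (n2^6/720)
      have hn2R : ((n2:ℝ)) = 2 * (Cnat K c : ℝ) * M := by
        rw [hn2]
        push_cast
        ring
      rw [hcard, hn2R, hgdef]
      have hne1 : (M:ℝ) ≠ 0 := by linarith
      have hne2 : (Cnat K c : ℝ) ≠ 0 := by linarith
      apply le_of_eq
      field_simp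
      ring
    · rfl
  exact le_of_tendsto_of_tendsto hg hseq hev

/-! ### The optimal geometric profile -/

noncomputable def dlt : ℝ := (Real.sqrt 3 - 1) / 2

lemma sqrt3_gt : 1 < Real.sqrt 3 := by
  nlinarith [Real.sq_sqrt (show (0:ℝ) ≤ 3 by norm_num), Real.sqrt_nonneg 3]

lemma sqrt3_lt : Real.sqrt 3 < 2 := by
  nlinarith [Real.sq_sqrt (show (0:ℝ) ≤ 3 by norm_num), Real.sqrt_nonneg 3]

lemma dlt_pos : 0 < dlt := by unfold dlt; have := sqrt3_gt; linarith

lemma dlt_lt_one : dlt < 1 := by unfold dlt; have := sqrt3_lt; linarith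

noncomputable def cj (j u : ℕ) : ℕ := ⌊(1 - dlt) * dlt^u * j⌋₊ + 1

lemma cj_ge_one (j u : ℕ) : 1 ≤ cj j u := Nat.le_add_left 1 _

lemma cj_div_tendsto (u : ℕ) :
    Filter.Tendsto (fun j : ℕ => (cj j u : ℝ)/(j:ℝ)) Filter.atTop
      (nhds ((1-dlt) * dlt^u)) := by
  have hx0 : 0 ≤ (1-dlt) * dlt^u := by
    have h1 := dlt_pos; have h2 := dlt_lt_one
    exact mul_nonneg (by linarith) (le_of_lt (pow_pos h1 u))
  have hupper : Filter.Tendsto (fun j : ℕ => (1-dlt) * dlt^u + 1/(j:ℝ)) Filter.atTop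
      (nhds ((1-dlt) * dlt^u + 0)) :=
    tendsto_const_nhds.add tendsto_one_div_atTop_nhds_zero_nat
  rw [add_zero] at hupper
  apply tendsto_of_tendsto_of_tendsto_of_le_of_le' tendsto_const_nhds hupper
  · filter_upwards [Filter.eventually_ge_atTop 1] with j hj
    have hj0 : (0:ℝ) < (j:ℝ) := by exact_mod_cast hj
    rw [le_div_iff₀ hj0]
    have h1 : (1-dlt) * dlt^u * j < (⌊(1 - dlt) * dlt^u * j⌋₊ : ℝ) + 1 :=
      Nat.lt_floor_add_one _
    have h2 : ((cj j u : ℕ) : ℝ) = (⌊(1 - dlt) * dlt^u * j⌋₊ : ℝ) + 1 := by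
      unfold cj; push_cast; ring
    rw [h2]
    linarith
  · filter_upwards [Filter.eventually_ge_atTop 1] with j hj
    have hj0 : (0:ℝ) < (j:ℝ) := by exact_mod_cast hj
    rw [div_le_iff₀ hj0]
    have h1 : (⌊(1 - dlt) * dlt^u * j⌋₊ : ℝ) ≤ (1-dlt) * dlt^u * j :=
      Nat.floor_le (mul_nonneg hx0 (Nat.cast_nonneg j))
    have h2 : ((cj j u : ℕ) : ℝ) = (⌊(1 - dlt) * dlt^u * j⌋₊ : ℝ) + 1 := by
      unfold cj; push_cast; ring
    rw [h2]
    have : ((1-dlt) * dlt^u + 1/(j:ℝ)) * j = (1-dlt) * dlt^u * j + 1 := by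
      field_simp
    rw [this]
    linarith

noncomputable def PKr (K : ℕ) : ℝ :=
  ∑ u ∈ Finset.range K, ((1-dlt) * dlt^u)^2 * (∑ v ∈ Finset.Ico (u+1) K, (1-dlt) * dlt^v)

noncomputable def QKr (K : ℕ) : ℝ := ∑ u ∈ Finset.range K, (1-dlt) * dlt^u

lemma Anat_tendsto (K : ℕ) :
    Filter.Tendsto (fun j : ℕ => (Anat K (cj j) : ℝ)/(j:ℝ)^3) Filter.atTop (nhds (PKr K)) := by
  have hident : ∀ᶠ j in Filter.atTop,
      (∑ u ∈ Finset.range K, ((cj j u : ℝ)/(j:ℝ))^2 *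
        (∑ v ∈ Finset.Ico (u+1) K, (cj j v : ℝ)/(j:ℝ)))
      = (Anat K (cj j) : ℝ)/(j:ℝ)^3 := by
    filter_upwards [Filter.eventually_ge_atTop 1] with j hj
    have hj0 : ((j:ℝ)) ≠ 0 := by
      have : (0:ℝ) < (j:ℝ) := by exact_mod_cast hj
      linarith
    have hcast : (Anat K (cj j) : ℝ)
        = ∑ u ∈ Finset.range K, ((cj j u : ℝ))^2 *
            (∑ v ∈ Finset.Ico (u+1) K, (cj j v : ℝ)) := by
      simp only [Anat, suffK]
      push_cast
      rfl
    rw [hcast, Finset.sum_div]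
    refine Finset.sum_congr rfl fun u _ => ?_
    rw [← Finset.sum_div, div_pow, div_mul_div_comm,
      show ((j:ℝ))^2*(j:ℝ) = ((j:ℝ))^3 from by ring]
  apply Filter.Tendsto.congr' hident
  unfold PKr
  apply tendsto_finset_sum
  intro u _
  exact ((cj_div_tendsto u).pow 2).mul
    (tendsto_finset_sum _ (fun v _ => cj_div_tendsto v))

lemma Cnat_tendsto (K : ℕ) :
    Filter.Tendsto (fun j : ℕ => (Cnat K (cj j) : ℝ)/(j:ℝ)) Filter.atTop (nhds (QKr K)) := by
  have hident : ∀ᶠ j in Filter.atTop,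
      (∑ u ∈ Finset.range K, (cj j u : ℝ)/(j:ℝ)) = (Cnat K (cj j) : ℝ)/(j:ℝ) := by
    filter_upwards with j
    rw [← Finset.sum_div]
    congr 1
    simp [Cnat]
  apply Filter.Tendsto.congr' hident
  unfold QKr
  exact tendsto_finset_sum _ (fun u _ => cj_div_tendsto u)

lemma QKr_pos {K : ℕ} (hK : 1 ≤ K) : 0 < QKr K := by
  have h1 := dlt_pos
  have h2 := dlt_lt_one
  apply Finset.sum_pos
  · intro u _
    exact mul_pos (by linarith) (pow_pos h1 u)
  · exact ⟨0, Finset.mem_range.mpr hK⟩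

lemma step2 {L : ℝ} (hL : Filter.Tendsto (fun n => maxDensity perm231564 n)
      Filter.atTop (nhds L)) (K : ℕ) (hK : 1 ≤ K) :
    (45/16 : ℝ) * (PKr K / (QKr K)^3)^2 ≤ L := by
  have hQ := QKr_pos hK
  have hv : ∀ j : ℕ, (45/16 : ℝ)
      * ((Anat K (cj j) : ℝ) / ((Cnat K (cj j) : ℝ))^3)^2 ≤ L :=
    fun j => step1 hL K (cj j) hK (fun u _ => cj_ge_one j u)
  have hident : ∀ᶠ j in Filter.atTop,
      (45/16 : ℝ) * (((Anat K (cj j) : ℝ)/(j:ℝ)^3) / (((Cnat K (cj j) : ℝ)/(j:ℝ))^3))^2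
      = (45/16 : ℝ) * ((Anat K (cj j) : ℝ) / ((Cnat K (cj j) : ℝ))^3)^2 := by
    filter_upwards [Filter.eventually_ge_atTop 1] with j hj
    have hj0 : ((j:ℝ)) ≠ 0 := by
      have : (0:ℝ) < (j:ℝ) := by exact_mod_cast hj
      linarith
    have hC : (1:ℝ) ≤ (Cnat K (cj j) : ℝ) := by
      exact_mod_cast Cnat_pos hK (fun u _ => cj_ge_one j u)
    have hC0 : ((Cnat K (cj j) : ℝ)) ≠ 0 := by linarith
    congr 1
    congr 1
    field_simp
  have htend : Filter.Tendsto (fun j : ℕ =>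
      (45/16 : ℝ) * ((Anat K (cj j) : ℝ) / ((Cnat K (cj j) : ℝ))^3)^2)
      Filter.atTop (nhds ((45/16 : ℝ) * (PKr K / (QKr K)^3)^2)) := by
    apply Filter.Tendsto.congr' hident
    exact ((((Anat_tendsto K).div ((Cnat_tendsto K).pow 3)
      (pow_ne_zero 3 (ne_of_gt hQ))).pow 2).const_mul _)
  exact le_of_tendsto htend (Filter.Eventually.of_forall hv)

lemma inner_sum_eq {u K : ℕ} (h : u + 1 ≤ K) :
    ∑ v ∈ Finset.Ico (u+1) K, (1-dlt) * dlt^v = dlt^(u+1) - dlt^K := by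
  have hne : dlt ≠ 1 := ne_of_lt dlt_lt_one
  have hne' : dlt - 1 ≠ 0 := by
    have := dlt_lt_one
    intro hc
    have : dlt = 1 := by linarith
    exact hne this
  rw [← Finset.mul_sum, geom_sum_Ico hne h]
  field_simp
  ring

lemma PKr_eq (K : ℕ) : PKr K
    = (1-dlt)^2*dlt * (∑ u ∈ Finset.range K, (dlt^3)^u)
      - (1-dlt)^2*dlt^K * (∑ u ∈ Finset.range K, (dlt^2)^u) := by
  unfold PKr
  rw [Finset.mul_sum, Finset.mul_sum, ← Finset.sum_sub_distrib]
  refine Finset.sum_congr rfl fun u hu => ?_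
  rw [inner_sum_eq (Finset.mem_range.mp hu)]
  ring

lemma PKr_tendsto :
    Filter.Tendsto PKr Filter.atTop (nhds ((1-dlt)^2*dlt * (1-dlt^3)⁻¹)) := by
  have h0 := dlt_pos
  have h1 := dlt_lt_one
  have t3 := (hasSum_geometric_of_lt_one (le_of_lt (pow_pos h0 3))
    (pow_lt_one₀ (le_of_lt h0) h1 (by norm_num))).tendsto_sum_nat
  have t2 := (hasSum_geometric_of_lt_one (le_of_lt (pow_pos h0 2))
    (pow_lt_one₀ (le_of_lt h0) h1 (by norm_num))).tendsto_sum_nat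
  have tp : Filter.Tendsto (fun K : ℕ => dlt^K) Filter.atTop (nhds 0) :=
    tendsto_pow_atTop_nhds_zero_of_lt_one (le_of_lt h0) h1
  have hfull := ((t3.const_mul ((1-dlt)^2*dlt)).sub ((tp.const_mul ((1-dlt)^2)).mul t2))
  rw [mul_zero, zero_mul, sub_zero] at hfull
  exact Filter.Tendsto.congr (fun K => (PKr_eq K).symm) hfull

lemma QKr_tendsto : Filter.Tendsto QKr Filter.atTop (nhds 1) := by
  have h0 := dlt_pos
  have h1 := dlt_lt_one
  have t := (hasSum_geometric_of_lt_one (le_of_lt h0) h1).tendsto_sum_nat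
  have hfull := t.const_mul (1-dlt)
  have hval : (1-dlt) * (1-dlt)⁻¹ = 1 := mul_inv_cancel₀ (by linarith)
  rw [hval] at hfull
  refine Filter.Tendsto.congr (fun K => ?_) hfull
  rw [QKr, Finset.mul_sum]

lemma final_algebra :
    (45/16 : ℝ) * (((1-dlt)^2*dlt*(1-dlt^3)⁻¹) / (1:ℝ)^3)^2
      = 5/16 * (2*Real.sqrt 3 - 3)^2 := by
  have hr : Real.sqrt 3 ^ 2 = 3 := Real.sq_sqrt (by norm_num)
  have hr1 : 1 < Real.sqrt 3 := sqrt3_gt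
  have hr2 : Real.sqrt 3 < 2 := sqrt3_lt
  have hd3 : 1 - dlt^3 = 3*(3-Real.sqrt 3)/4 := by
    rw [show dlt = (Real.sqrt 3 - 1)/2 from rfl]
    linear_combination ((3 - Real.sqrt 3)/8) * hr
  have h13 : (1:ℝ) - dlt^3 ≠ 0 := by
    rw [hd3]
    have h3 : 0 < 3 - Real.sqrt 3 := by linarith
    positivity
  have hmain : (1-dlt)^2*dlt = (2*Real.sqrt 3-3)/3 * (1 - dlt^3) := by
    rw [hd3, show dlt = (Real.sqrt 3 - 1)/2 from rfl]
    linear_combination ((Real.sqrt 3 - 3)/8) * hr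
  have hE : (1-dlt)^2*dlt*(1-dlt^3)⁻¹ = (2*Real.sqrt 3-3)/3 := by
    rw [hmain, mul_assoc, mul_inv_cancel₀ h13, mul_one]
  rw [hE]
  ring

theorem stmt_18' :
    ∃ L : ℝ, Filter.Tendsto (fun n => maxDensity perm231564 n) Filter.atTop (nhds L) ∧
      (5 / 16 : ℝ) * (2 * Real.sqrt 3 - 3) ^ 2 ≤ L := by
  have hanti : Antitone (fun k : ℕ => maxDensity perm231564 (k+6)) := by
    apply antitone_nat_of_succ_le
    intro k
    exact maxDensity_succ_le perm231564 (by norm_num) (by omega : 6 ≤ k + 6)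
  have hbdd : BddBelow (Set.range fun k : ℕ => maxDensity perm231564 (k+6)) := by
    refine ⟨0, ?_⟩
    rintro x ⟨k, rfl⟩
    exact maxDensity_nonneg _ _
  have hgL := tendsto_atTop_ciInf hanti hbdd
  set L := ⨅ k : ℕ, maxDensity perm231564 (k+6) with hLdef
  have hL : Filter.Tendsto (fun n => maxDensity perm231564 n) Filter.atTop (nhds L) := by
    have hcomp := hgL.comp (tendsto_sub_atTop_nat 6)
    apply Filter.Tendsto.congr' ?_ hcomp
    filter_upwards [Filter.eventually_ge_atTop 6] with n hn
    have : n - 6 + 6 = n := by omega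
    simp only [Function.comp]
    rw [this]
  refine ⟨L, hL, ?_⟩
  have hVK : Filter.Tendsto (fun K : ℕ => (45/16 : ℝ) * (PKr K / (QKr K)^3)^2)
      Filter.atTop
      (nhds ((45/16 : ℝ) * (((1-dlt)^2*dlt * (1-dlt^3)⁻¹) / (1:ℝ)^3)^2)) :=
    ((PKr_tendsto.div (QKr_tendsto.pow 3) (by norm_num)).pow 2).const_mul _
  have hle : (45/16 : ℝ) * (((1-dlt)^2*dlt * (1-dlt^3)⁻¹) / (1:ℝ)^3)^2 ≤ L := by
    apply le_of_tendsto hVK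
    filter_upwards [Filter.eventually_ge_atTop 1] with K hK
    exact step2 hL K hK
  rw [final_algebra] at hle
  exact hle

end PackingAux


/-- p(231564) ≥ (2√3 − 3)²·6!/48² = (5/16)·(2√3 − 3)². -/
theorem stmt_18 :
    ∃ L : ℝ, Tendsto (fun n => maxDensity perm231564 n) atTop (nhds L) ∧
      (5 / 16 : ℝ) * (2 * Real.sqrt 3 - 3) ^ 2 ≤ L := by
  exact PackingAux.stmt_18'
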